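/- arXiv:1805.10112 — 2 statements merged into one kernel-verified Lean document; each statement's English description precedes it below -/
import Mathlib

section
/- Let G = (V,E) be a finite connected simple graph with at least one edge. For V_H ⊆ V with |V_H| ≥ 2 and H = G[V_H] connected with at least one edge, define θ(H) = |E_H|/(|V_H| − 1). Suppose H = G[V_H] is such an induced connected subgraph maximizing θ over all induced connected subgraphs of G with at least one edge. Then H is a homogeneous core of G: H is homogeneous (there exists a pmf on Γ_H with constant edge usage probability) and every fair spanning tree γ of G satisfies γ ∩ E_H ∈ Γ_H. -/
noncomputable section
open scoped Classical
open Finset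

variable {V : Type*} [Fintype V] [DecidableEq V]

/-- A pmf on a finite family `Γ` of edge sets. -/
def IsPmf (Γ : Finset (Finset (Sym2 V))) (μ : Finset (Sym2 V) → ℝ) : Prop :=
  (∀ γ, 0 ≤ μ γ) ∧ (∀ γ, γ ∉ Γ → μ γ = 0) ∧ ∑ γ ∈ Γ, μ γ = 1

/-- Edge usage probability. -/
def eta (Γ : Finset (Finset (Sym2 V))) (μ : Finset (Sym2 V) → ℝ) (e : Sym2 V) : ℝ :=
  ∑ γ ∈ Γ.filter (fun γ => e ∈ γ), μ γ

/-- Expected overlap. -/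
def EO (Γ : Finset (Finset (Sym2 V))) (μ : Finset (Sym2 V) → ℝ) : ℝ :=
  ∑ γ ∈ Γ, ∑ γ' ∈ Γ, ((γ ∩ γ').card : ℝ) * μ γ * μ γ'

/-- Minimum expected overlap. -/
def MEO (Γ : Finset (Finset (Sym2 V))) : ℝ :=
  sInf {x : ℝ | ∃ μ, IsPmf Γ μ ∧ x = EO Γ μ}

/-- The set of spanning trees of `G`, as finsets of edges. -/
def spanningTrees (G : SimpleGraph V) : Finset (Finset (Sym2 V)) :=
  Finset.univ.filter (fun γ => ↑γ ⊆ G.edgeSet ∧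
    (SimpleGraph.fromEdgeSet (↑γ : Set (Sym2 V))).Connected ∧
    γ.card = Fintype.card V - 1)

/-- Edges of `G` with both endpoints in `W`. -/
def edgesWithin (G : SimpleGraph V) (W : Finset V) : Finset (Sym2 V) :=
  G.edgeFinset.filter (fun e => ∀ v ∈ e, v ∈ W)

/-- `γ` is a spanning tree of the subgraph of `G` induced by the vertex set `W`. -/
def IsSpanningTreeOn (G : SimpleGraph V) (W : Finset V) (γ : Finset (Sym2 V)) : Prop :=
  γ ⊆ edgesWithin G W ∧
    ((SimpleGraph.fromEdgeSet (↑γ : Set (Sym2 V))).induce (↑W : Set V)).Connected ∧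
    γ.card = W.card - 1

def spanningTreesOn (G : SimpleGraph V) (W : Finset V) : Finset (Finset (Sym2 V)) :=
  Finset.univ.filter (IsSpanningTreeOn G W)

def Adm (Γ : Finset (Finset (Sym2 V))) (ρ : Sym2 V → ℝ) : Prop :=
  (∀ e, 0 ≤ ρ e) ∧ ∀ γ ∈ Γ, 1 ≤ ∑ e ∈ γ, ρ e

def Mod2 (Eset : Finset (Sym2 V)) (Γ : Finset (Finset (Sym2 V))) : ℝ :=
  sInf {x : ℝ | ∃ ρ, Adm Γ ρ ∧ x = ∑ e ∈ Eset, (ρ e) ^ 2}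

/-- A fair spanning tree. -/
def IsFair (G : SimpleGraph V) (γ : Finset (Sym2 V)) : Prop :=
  ∃ μ, IsPmf (spanningTrees G) μ ∧ EO (spanningTrees G) μ = MEO (spanningTrees G) ∧ 0 < μ γ

def IsFeasiblePartition (G : SimpleGraph V) (P : Finset (Finset V)) : Prop :=
  2 ≤ P.card ∧ (∀ p ∈ P, p.Nonempty) ∧ (∀ v : V, ∃! p, p ∈ P ∧ v ∈ p) ∧
    ∀ p ∈ P, (G.induce (↑p : Set V)).Connected

/-- The edges of `G` joining distinct parts of the partition `P`. -/
def cutEdges (G : SimpleGraph V) (P : Finset (Finset V)) : Finset (Sym2 V) :=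
  G.edgeFinset.filter (fun e => ¬ ∃ p ∈ P, ∀ v ∈ e, v ∈ p)

/-- `G` is homogeneous. -/
def IsHomogeneous (G : SimpleGraph V) : Prop :=
  ∃ μ, IsPmf (spanningTrees G) μ ∧
    ∃ c : ℝ, ∀ e ∈ G.edgeFinset, eta (spanningTrees G) μ e = c

/-!
Fix an MEO-optimal pmf `μ` on the spanning trees of `G`, with edge usage `η`. Moving a little
mass from a charged tree to another tree cannot lower the overlap, so charged trees minimise
`∑_{e ∈ γ} η e`; by the exchange property, an edge `e` of a charged tree `γ` then has
`η e ≤ η f` for every edge `f` of `G` reconnecting the two sides of `γ - e`.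

Given an edge `xy`, let `U` be the component of `x` in the subgraph of edges of usage at most
`t = η(xy)`. The inequality above shows that every charged tree spans `U` and that the edges of
`U` have usage at most `t`, so `|U| - 1 ≤ ∑_{E_U} η ≤ t |E_U|`, i.e. `1 ≤ t θ(U) ≤ t θ(H)`.
Hence `η ≥ 1 / θ(H)` on every edge, while every tree meets `E_H` in a forest, so
`|V_H| - 1 = |E_H| / θ(H) ≤ ∑_{E_H} η ≤ |V_H| - 1`. Equality makes `η` constant on `E_H` and
forces every charged tree to meet `E_H` in `|V_H| - 1` edges, i.e. in a spanning tree of `H`.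
Pushing `μ` forward along `γ ↦ γ ∩ E_H` gives the homogeneous pmf on `H`.
-/

section Overlap

omit [Fintype V]

variable {Γ : Finset (Finset (Sym2 V))} {μ : Finset (Sym2 V) → ℝ}

def IsMEOOptimal (Γ : Finset (Finset (Sym2 V))) (μ : Finset (Sym2 V) → ℝ) : Prop :=
  IsPmf Γ μ ∧ EO Γ μ = MEO Γ

section

omit [DecidableEq V]

lemma isClosed_setOf_isPmf (Γ : Finset (Finset (Sym2 V))) : IsClosed {μ | IsPmf Γ μ} := by
  simp only [IsPmf, Set.ofPred_and, Set.ofPred_forall]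
  refine (isClosed_iInter fun γ => isClosed_le continuous_const (continuous_apply γ)).inter
    ((isClosed_iInter fun γ => isClosed_iInter fun _ =>
      isClosed_eq (continuous_apply γ) continuous_const).inter ?_)
  exact isClosed_eq (continuous_finsetSum _ fun γ _ => continuous_apply γ) continuous_const

lemma isCompact_setOf_isPmf (Γ : Finset (Finset (Sym2 V))) : IsCompact {μ | IsPmf Γ μ} := by
  refine (isCompact_univ_pi fun _ => isCompact_Icc (a := (0 : ℝ)) (b := 1)).of_isClosed_subset
    (isClosed_setOf_isPmf Γ) fun μ hμ γ _ => ⟨hμ.1 γ, ?_⟩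
  by_cases hγ : γ ∈ Γ
  · exact hμ.2.2 ▸ single_le_sum (fun γ _ => hμ.1 γ) hγ
  · exact (hμ.2.1 γ hγ).trans_le zero_le_one

lemma IsPmf.mem_of_pos (hμ : IsPmf Γ μ) {γ : Finset (Sym2 V)} (h : 0 < μ γ) : γ ∈ Γ :=
  by_contra fun hγ => h.ne' (hμ.2.1 γ hγ)

variable {f : Finset (Sym2 V) → ℝ} {a : ℝ}

lemma IsPmf.sum_mul_le (hμ : IsPmf Γ μ) (h : ∀ γ ∈ Γ, 0 < μ γ → f γ ≤ a) :
    ∑ γ ∈ Γ, μ γ * f γ ≤ a := by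
  calc ∑ γ ∈ Γ, μ γ * f γ ≤ ∑ γ ∈ Γ, μ γ * a := sum_le_sum fun γ hγ => by
        rcases (hμ.1 γ).eq_or_lt with h0 | h0
        · simp [← h0]
        · exact mul_le_mul_of_nonneg_left (h γ hγ h0) h0.le
    _ = a := by rw [← sum_mul, hμ.2.2, one_mul]

lemma IsPmf.le_sum_mul (hμ : IsPmf Γ μ) (h : ∀ γ ∈ Γ, 0 < μ γ → a ≤ f γ) :
    a ≤ ∑ γ ∈ Γ, μ γ * f γ := by
  have := hμ.sum_mul_le (f := fun γ => -f γ) (a := -a) fun γ hγ hpos => neg_le_neg (h γ hγ hpos)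
  simp only [mul_neg, sum_neg_distrib] at this
  linarith

lemma IsPmf.eq_of_le_sum_mul (hμ : IsPmf Γ μ) (hle : ∀ γ ∈ Γ, f γ ≤ a)
    (hsum : a ≤ ∑ γ ∈ Γ, μ γ * f γ) {γ : Finset (Sym2 V)} (hγ : γ ∈ Γ) (hpos : 0 < μ γ) :
    f γ = a := by
  have hterm : ∀ γ ∈ Γ, μ γ * f γ ≤ μ γ * a := fun γ hγ =>
    mul_le_mul_of_nonneg_left (hle γ hγ) (hμ.1 γ)
  have hsum' : ∑ γ ∈ Γ, μ γ * f γ = ∑ γ ∈ Γ, μ γ * a := by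
    refine le_antisymm (sum_le_sum hterm) ?_
    rwa [← sum_mul, hμ.2.2, one_mul]
  exact mul_left_cancel₀ hpos.ne' ((sum_eq_sum_iff_of_le hterm).mp hsum' γ hγ)

end

lemma EO_nonneg (hμ : IsPmf Γ μ) : 0 ≤ EO Γ μ :=
  sum_nonneg fun γ _ => sum_nonneg fun γ' _ =>
    mul_nonneg (mul_nonneg (Nat.cast_nonneg _) (hμ.1 γ)) (hμ.1 γ')

lemma MEO_le_EO (hμ : IsPmf Γ μ) : MEO Γ ≤ EO Γ μ :=
  csInf_le ⟨0, by rintro _ ⟨ν, hν, rfl⟩; exact EO_nonneg hν⟩ ⟨μ, hμ, rfl⟩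

lemma continuous_EO (Γ : Finset (Finset (Sym2 V))) : Continuous (EO Γ) := by
  unfold EO
  fun_prop

lemma exists_isMEOOptimal (hΓ : Γ.Nonempty) : ∃ μ, IsMEOOptimal Γ μ := by
  obtain ⟨γ₀, hγ₀⟩ := hΓ
  have hdirac : IsPmf Γ (fun γ => if γ = γ₀ then 1 else 0) := by
    refine ⟨fun γ => by dsimp only; split_ifs <;> norm_num,
      fun γ hγ => if_neg (ne_of_mem_of_not_mem hγ₀ hγ).symm, ?_⟩
    rw [sum_ite_eq' Γ γ₀, if_pos hγ₀]
  obtain ⟨μ, hμ, hmin⟩ := (isCompact_setOf_isPmf Γ).exists_isMinOn (s := {μ | IsPmf Γ μ})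
    ⟨_, hdirac⟩ (continuous_EO Γ).continuousOn
  have hleast : IsLeast {x | ∃ ν, IsPmf Γ ν ∧ x = EO Γ ν} (EO Γ μ) :=
    ⟨⟨μ, hμ, rfl⟩, by rintro _ ⟨ν, hν, rfl⟩; exact hmin hν⟩
  exact ⟨μ, hμ, hleast.csInf_eq.symm⟩

lemma sum_eta (Γ : Finset (Finset (Sym2 V))) (μ : Finset (Sym2 V) → ℝ) (s : Finset (Sym2 V)) :
    ∑ e ∈ s, eta Γ μ e = ∑ γ ∈ Γ, μ γ * #(γ ∩ s) := by
  simp only [eta, sum_filter]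
  rw [sum_comm]
  refine sum_congr rfl fun γ _ => ?_
  rw [sum_ite_mem, sum_const, nsmul_eq_mul, inter_comm, mul_comm]

lemma EO_add_mul (Γ : Finset (Finset (Sym2 V))) (μ ν : Finset (Sym2 V) → ℝ) (t : ℝ) :
    EO Γ (fun γ => μ γ + t * ν γ) =
      EO Γ μ + 2 * t * ∑ γ ∈ Γ, ν γ * ∑ e ∈ γ, eta Γ μ e + t ^ 2 * EO Γ ν := by
  have hcross : ∑ γ ∈ Γ, ν γ * ∑ e ∈ γ, eta Γ μ e
      = ∑ γ ∈ Γ, ∑ γ' ∈ Γ, (#(γ ∩ γ') : ℝ) * μ γ * ν γ' := by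
    simp_rw [sum_eta, mul_sum]
    rw [sum_comm]
    exact sum_congr rfl fun γ _ => sum_congr rfl fun γ' _ => by rw [inter_comm]; ring
  have hsymm : ∑ γ ∈ Γ, ∑ γ' ∈ Γ, (#(γ ∩ γ') : ℝ) * ν γ * μ γ'
      = ∑ γ ∈ Γ, ∑ γ' ∈ Γ, (#(γ ∩ γ') : ℝ) * μ γ * ν γ' := by
    rw [sum_comm]
    exact sum_congr rfl fun γ _ => sum_congr rfl fun γ' _ => by rw [inter_comm]; ring
  have hexpand : ∀ γ γ' : Finset (Sym2 V), (#(γ ∩ γ') : ℝ) * (μ γ + t * ν γ) * (μ γ' + t * ν γ')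
      = #(γ ∩ γ') * μ γ * μ γ' + t * (#(γ ∩ γ') * μ γ * ν γ')
        + t * (#(γ ∩ γ') * ν γ * μ γ') + t ^ 2 * (#(γ ∩ γ') * ν γ * ν γ') := fun _ _ => by ring
  simp only [EO, hexpand, sum_add_distrib, ← mul_sum, hsymm, hcross]
  ring

lemma nonneg_of_forall_mul_add_sq_mul_nonneg {a b ε : ℝ} (hε : 0 < ε)
    (h : ∀ t, 0 < t → t ≤ ε → 0 ≤ t * a + t ^ 2 * b) : 0 ≤ a := by
  by_contra! ha
  set t := min ε (-a / (|b| + 1))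
  have ht : 0 < t := lt_min hε (div_pos (neg_pos.mpr ha) (by positivity))
  have htb : t * (|b| + 1) ≤ -a := (le_div_iff₀ (by positivity)).mp (min_le_right _ _)
  have := h t ht (min_le_left _ _)
  nlinarith [le_abs_self b, mul_pos ht ht]

variable {γ₀ γ₁ : Finset (Sym2 V)}

lemma IsPmf.add_mul_transfer (hμ : IsPmf Γ μ) (h₀ : γ₀ ∈ Γ) (h₁ : γ₁ ∈ Γ) (hne : γ₀ ≠ γ₁)
    {t : ℝ} (ht : 0 ≤ t) (ht₀ : t ≤ μ γ₀) :
    IsPmf Γ (fun γ => μ γ + t * ((if γ = γ₁ then 1 else 0) - if γ = γ₀ then 1 else 0)) := by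
  refine ⟨fun γ => ?_, fun γ hγ => ?_, ?_⟩
  · dsimp only
    by_cases hγ₀ : γ = γ₀
    · rw [hγ₀, if_neg hne, if_pos rfl]
      linarith
    · rw [if_neg hγ₀, sub_zero]
      exact add_nonneg (hμ.1 γ) (mul_nonneg ht (by split_ifs <;> norm_num))
  · simp [hμ.2.1 γ hγ, ne_of_mem_of_not_mem h₀ hγ |>.symm, ne_of_mem_of_not_mem h₁ hγ |>.symm]
  · simp [sum_add_distrib, ← mul_sum, sum_sub_distrib, sum_ite_eq', h₀, h₁, hμ.2.2]

lemma IsMEOOptimal.sum_eta_le (hμ : IsMEOOptimal Γ μ) (h₀ : γ₀ ∈ Γ) (hpos : 0 < μ γ₀)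
    (h₁ : γ₁ ∈ Γ) : ∑ e ∈ γ₀, eta Γ μ e ≤ ∑ e ∈ γ₁, eta Γ μ e := by
  rcases eq_or_ne γ₀ γ₁ with rfl | hne
  · rfl
  set ν : Finset (Sym2 V) → ℝ := fun γ => (if γ = γ₁ then 1 else 0) - if γ = γ₀ then 1 else 0
  have hν : ∑ γ ∈ Γ, ν γ * ∑ e ∈ γ, eta Γ μ e = ∑ e ∈ γ₁, eta Γ μ e - ∑ e ∈ γ₀, eta Γ μ e := by
    simp [ν, sub_mul, sum_sub_distrib, sum_ite_eq', h₀, h₁]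
  -- moving mass `t` from `γ₀` to `γ₁` changes the overlap by `2t(∑_{γ₁} η - ∑_{γ₀} η) + O(t²)`
  have key := nonneg_of_forall_mul_add_sq_mul_nonneg
    (a := 2 * (∑ e ∈ γ₁, eta Γ μ e - ∑ e ∈ γ₀, eta Γ μ e)) (b := EO Γ ν) hpos fun t ht ht₀ => by
    have := MEO_le_EO (μ := fun γ => μ γ + t * ν γ) (hμ.1.add_mul_transfer h₀ h₁ hne ht.le ht₀)
    rw [EO_add_mul, hν, ← hμ.2] at this
    linarith
  linarith

def mapPmf (Γ : Finset (Finset (Sym2 V))) (f : Finset (Sym2 V) → Finset (Sym2 V))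
    (μ : Finset (Sym2 V) → ℝ) (β : Finset (Sym2 V)) : ℝ :=
  ∑ γ ∈ Γ with f γ = β, μ γ

variable {Γ' : Finset (Finset (Sym2 V))} {f : Finset (Sym2 V) → Finset (Sym2 V)}

lemma IsPmf.mapPmf (hμ : IsPmf Γ μ) (hf : ∀ γ ∈ Γ, 0 < μ γ → f γ ∈ Γ') :
    IsPmf Γ' (mapPmf Γ f μ) := by
  refine ⟨fun β => sum_nonneg fun γ _ => hμ.1 γ, fun β hβ => sum_eq_zero fun γ hγ => ?_, ?_⟩
  · rw [mem_filter] at hγ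
    exact ((hμ.1 γ).eq_or_lt.resolve_right fun h => hβ (hγ.2 ▸ hf γ hγ.1 h)).symm
  · simp only [_root_.mapPmf]
    rw [sum_fiberwise_eq_sum_filter, sum_filter_of_ne, hμ.2.2]
    exact fun γ hγ hne => hf γ hγ ((hμ.1 γ).lt_of_ne hne.symm)

lemma eta_mapPmf (hμ : IsPmf Γ μ) (hf : ∀ γ ∈ Γ, 0 < μ γ → f γ ∈ Γ') {e : Sym2 V}
    (he : ∀ γ, e ∈ f γ ↔ e ∈ γ) : eta Γ' (mapPmf Γ f μ) e = eta Γ μ e := by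
  simp only [eta, mapPmf]
  rw [sum_fiberwise_eq_sum_filter, sum_filter, sum_filter]
  refine sum_congr rfl fun γ hγ => ?_
  rcases (hμ.1 γ).eq_or_lt with h | h
  · simp [← h]
  · simp [hf γ hγ h, he]

lemma IsPmf.eta_nonneg (hμ : IsPmf Γ μ) (e : Sym2 V) : 0 ≤ eta Γ μ e :=
  sum_nonneg fun γ _ => hμ.1 γ

lemma exists_mem_pos_of_eta_pos {e : Sym2 V} (h : 0 < eta Γ μ e) : ∃ γ ∈ Γ, e ∈ γ ∧ 0 < μ γ := by
  obtain ⟨γ, hγ, hpos⟩ := exists_lt_of_sum_lt (f := fun _ => (0 : ℝ)) (by simpa [eta] using h)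
  exact ⟨γ, (mem_filter.mp hγ).1, (mem_filter.mp hγ).2, hpos⟩

end Overlap

namespace SimpleGraph

omit [Fintype V] [DecidableEq V]

variable {G H : SimpleGraph V}

lemma Connected.reachable_deleteEdges_or (hG : G.Connected) (a b x : V) :
    (G.deleteEdges {s(a, b)}).Reachable x a ∨ (G.deleteEdges {s(a, b)}).Reachable x b := by
  by_contra! h
  obtain ⟨p⟩ := hG.preconnected x a
  obtain ⟨⟨⟨u, v⟩, huv⟩, -, hu, hv⟩ :=
    p.exists_boundary_dart {y | (G.deleteEdges {s(a, b)}).Reachable x y} Reachable.rfl h.1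
  by_cases he : s(u, v) = s(a, b)
  · rcases Sym2.eq_iff.mp he with ⟨rfl, -⟩ | ⟨rfl, -⟩
    exacts [h.1 hu, h.2 hu]
  · exact hv (hu.trans (deleteEdges_adj.mpr ⟨huv, he⟩).reachable)

lemma IsAcyclic.not_reachable_deleteEdges (hG : G.IsAcyclic) {x y : V} {p : G.Walk x y}
    (hp : p.IsPath) {e : Sym2 V} (he : e ∈ p.edges) : ¬ (G.deleteEdges {e}).Reachable x y := by
  rintro ⟨q⟩
  have hpq := (hG.subsingleton_path x y).elim ⟨p, hp⟩ ⟨_, q.bypass_isPath.mapLe (deleteEdges_le _)⟩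
  rw [Subtype.mk.injEq] at hpq
  rw [hpq, Walk.edges_mapLe_eq_edges] at he
  exact (edgeSet_deleteEdges _ ▸ q.bypass.edges_subset_edgeSet he).2 rfl

lemma IsAcyclic.card_edgeSet_add_one_le [Finite V] [Nonempty V] (hH : H.IsAcyclic) :
    Nat.card H.edgeSet + 1 ≤ Nat.card V := by
  obtain ⟨F, hHF, -, hF⟩ := connected_top.exists_isTree_le_of_le_of_isAcyclic le_top hH
  rw [← (isTree_iff_connected_and_card.mp hF).2]
  gcongr
  exact Nat.card_mono (Set.toFinite _) (edgeSet_mono hHF)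

lemma IsAcyclic.isTree_of_card_edgeSet [Finite V] [Nonempty V] (hH : H.IsAcyclic)
    (hcard : Nat.card V ≤ Nat.card H.edgeSet + 1) : H.IsTree := by
  obtain ⟨F, hHF, -, hF⟩ := connected_top.exists_isTree_le_of_le_of_isAcyclic le_top hH
  have hedges : H.edgeSet = F.edgeSet := by
    refine Set.eq_of_subset_of_ncard_le (edgeSet_mono hHF) ?_ (Set.toFinite _)
    have hF' := (isTree_iff_connected_and_card.mp hF).2
    rw [Nat.card_coe_set_eq] at hcard hF'
    omega
  rwa [edgeSet_inj.mp hedges]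

lemma connected_induce_setOf_reachable (hHG : H ≤ G) (x : V) :
    (G.induce {v | H.Reachable x v}).Connected := by
  refine (connected_iff_exists_forall_reachable _).mpr ⟨⟨x, Reachable.rfl⟩, fun ⟨v, ⟨p⟩⟩ => ?_⟩
  exact (p.induce {v | H.Reachable x v} fun u hu => ⟨p.takeUntil u hu⟩).reachable.mono
    fun _ _ h => hHG h

end SimpleGraph

open SimpleGraph

abbrev ofEdges (s : Finset (Sym2 V)) : SimpleGraph V := fromEdgeSet ↑s

section EdgeSets

variable {G : SimpleGraph V} {s γ : Finset (Sym2 V)} {W : Finset V}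

omit [Fintype V] in
lemma ofEdges_erase (s : Finset (Sym2 V)) (e : Sym2 V) :
    ofEdges (s.erase e) = (ofEdges s).deleteEdges {e} := by
  ext a b
  simp only [fromEdgeSet_adj, deleteEdges_adj, coe_erase, Set.mem_sdiff, Set.mem_singleton_iff,
    mem_coe]
  tauto

omit [Fintype V] [DecidableEq V] in
lemma edgeSet_ofEdges (hs : ↑s ⊆ G.edgeSet) : (ofEdges s).edgeSet = ↑s := by
  rw [edgeSet_fromEdgeSet, sdiff_eq_left, Set.disjoint_left]
  exact fun e he => G.not_isDiag_of_mem_edgeSet (hs he)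

lemma mem_edgesWithin {e : Sym2 V} :
    e ∈ edgesWithin G W ↔ e ∈ G.edgeSet ∧ ∀ v ∈ e, v ∈ W := by
  simp [edgesWithin]

lemma one_lt_card_of_edgesWithin_nonempty (h : (edgesWithin G W).Nonempty) : 1 < #W := by
  obtain ⟨e, he⟩ := h
  induction e using Sym2.ind with | h a b => ?_
  obtain ⟨hab, hW⟩ := mem_edgesWithin.mp he
  exact one_lt_card.mpr ⟨a, hW a (Sym2.mem_mk_left a b), b, hW b (Sym2.mem_mk_right a b), hab.ne⟩

lemma induce_ofEdges_inter_edgesWithin (hγ : ↑γ ⊆ G.edgeSet) :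
    (ofEdges (γ ∩ edgesWithin G W)).induce (W : Set V) = (ofEdges γ).induce (W : Set V) := by
  ext ⟨a, ha⟩ ⟨b, hb⟩
  simp only [comap_adj, Function.Embedding.coe_subtype, fromEdgeSet_adj, coe_inter,
    Set.mem_inter_iff, mem_coe, mem_edgesWithin]
  constructor
  · exact fun h => ⟨h.1.1, h.2⟩
  · refine fun h => ⟨⟨h.1, hγ h.1, fun v hv => ?_⟩, h.2⟩
    rcases Sym2.mem_iff.mp hv with rfl | rfl
    exacts [ha, hb]

lemma natCard_edgeSet_induce_ofEdges (hs : s ⊆ edgesWithin G W) :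
    Nat.card ((ofEdges s).induce (W : Set V)).edgeSet = #s := by
  have hsG : ↑s ⊆ G.edgeSet := fun e he => (mem_edgesWithin.mp (hs he)).1
  have hsupp : (ofEdges s).support ⊆ W := by
    rintro v ⟨w, hvw⟩
    exact (mem_edgesWithin.mp (hs ((fromEdgeSet_adj _).mp hvw).1)).2 v (Sym2.mem_mk_left v w)
  rw [Nat.card_eq_fintype_card, ← edgeFinset_card]
  calc _ = #(ofEdges s).edgeFinset := by convert card_edgeFinset_induce_of_support_subset hsupp
    _ = #s := by rw [coe_inj.mp ((coe_edgeFinset _).trans (edgeSet_ofEdges hsG))]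

lemma card_le_card_add_one_of_connected (hs : s ⊆ edgesWithin G W)
    (hc : ((ofEdges s).induce (W : Set V)).Connected) : #W ≤ #s + 1 := by
  have := hc.card_vert_le_card_edgeSet_add_one
  rwa [natCard_edgeSet_induce_ofEdges hs, Nat.card_coe_set_eq, Set.ncard_coe_finset] at this

lemma card_add_one_le_of_isAcyclic (hs : s ⊆ edgesWithin G W) (ha : (ofEdges s).IsAcyclic)
    (hW : W.Nonempty) : #s + 1 ≤ #W := by
  have : Nonempty (W : Set V) := hW.coe_sort
  have := (ha.induce (W : Set V)).card_edgeSet_add_one_le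
  rwa [natCard_edgeSet_induce_ofEdges hs, Nat.card_coe_set_eq, Set.ncard_coe_finset] at this

lemma isSpanningTreeOn_of_isAcyclic (hs : s ⊆ edgesWithin G W) (ha : (ofEdges s).IsAcyclic)
    (hW : W.Nonempty) (hcard : #W ≤ #s + 1) : IsSpanningTreeOn G W s := by
  have : Nonempty (W : Set V) := hW.coe_sort
  refine ⟨hs, ((ha.induce (W : Set V)).isTree_of_card_edgeSet ?_).connected, ?_⟩
  · rwa [natCard_edgeSet_induce_ofEdges hs, Nat.card_coe_set_eq, Set.ncard_coe_finset]
  · have := card_add_one_le_of_isAcyclic hs ha hW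
    omega

end EdgeSets

section SpanningTrees

variable {G : SimpleGraph V} {γ : Finset (Sym2 V)}

lemma mem_spanningTrees_iff : γ ∈ spanningTrees G ↔
    ↑γ ⊆ G.edgeSet ∧ (ofEdges γ).Connected ∧ #γ = Fintype.card V - 1 := by
  simp [spanningTrees]

lemma isTree_of_mem_spanningTrees (hγ : γ ∈ spanningTrees G) : (ofEdges γ).IsTree := by
  obtain ⟨hsub, hconn, hcard⟩ := mem_spanningTrees_iff.mp hγ
  refine isTree_iff_connected_and_card.mpr ⟨hconn, ?_⟩
  rw [edgeSet_ofEdges hsub, Nat.card_coe_set_eq, Set.ncard_coe_finset, hcard,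
    Nat.card_eq_fintype_card]
  have := Fintype.card_pos_iff.mpr hconn.nonempty
  omega

lemma spanningTrees_nonempty (hG : G.Connected) : (spanningTrees G).Nonempty := by
  obtain ⟨T, hTG, hT⟩ := hG.exists_isTree_le
  refine ⟨T.edgeFinset, mem_spanningTrees_iff.mpr ⟨?_, ?_, ?_⟩⟩
  · rw [coe_edgeFinset]
    exact edgeSet_mono hTG
  · rw [ofEdges, coe_edgeFinset, fromEdgeSet_edgeSet]
    exact hT.connected
  · have := hT.card_edgeFinset
    omega

omit [Fintype V] in
lemma notMem_erase_of_not_reachable {e : Sym2 V} {w z : V} (hwz : w ≠ z)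
    (hsep : ¬ ((ofEdges γ).deleteEdges {e}).Reachable w z) : s(w, z) ∉ γ.erase e := fun h =>
  hsep (by rw [← ofEdges_erase]; exact ((fromEdgeSet_adj _).mpr ⟨h, hwz⟩).reachable)

lemma insert_erase_mem_spanningTrees (hγ : γ ∈ spanningTrees G) {e : Sym2 V} (he : e ∈ γ)
    {w z : V} (hwz : G.Adj w z) (hsep : ¬ ((ofEdges γ).deleteEdges {e}).Reachable w z) :
    insert s(w, z) (γ.erase e) ∈ spanningTrees G := by
  obtain ⟨hsub, hconn, hcard⟩ := mem_spanningTrees_iff.mp hγ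
  induction e using Sym2.ind with | h a b => ?_
  set T := ofEdges (insert s(w, z) (γ.erase s(a, b)))
  have hle : (ofEdges γ).deleteEdges {s(a, b)} ≤ T := by
    rw [← ofEdges_erase]
    exact fromEdgeSet_mono (by simp)
  have hadj : T.Adj w z := (fromEdgeSet_adj _).mpr ⟨by simp, hwz.ne⟩
  have hab : T.Reachable a b := by
    rcases hconn.reachable_deleteEdges_or a b w with hw | hw <;>
      rcases hconn.reachable_deleteEdges_or a b z with hz | hz
    · exact absurd (hw.trans hz.symm) hsep
    · exact (hw.symm.mono hle).trans (hadj.reachable.trans (hz.mono hle))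
    · exact (hz.symm.mono hle).trans (hadj.symm.reachable.trans (hw.mono hle))
    · exact absurd (hw.trans hz.symm) hsep
  have hconnT : T.Connected := by
    refine (connected_iff_exists_forall_reachable T).mpr ⟨a, fun x => ?_⟩
    rcases hconn.reachable_deleteEdges_or a b x with h | h
    · exact (h.mono hle).symm
    · exact hab.trans (h.mono hle).symm
  have hnotin := notMem_erase_of_not_reachable hwz.ne hsep
  refine mem_spanningTrees_iff.mpr ⟨?_, hconnT, ?_⟩
  · rw [coe_insert, Set.insert_subset_iff]
    exact ⟨hwz, (coe_subset.mpr (erase_subset _ _)).trans hsub⟩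
  · rw [card_insert_of_notMem hnotin, card_erase_of_mem he]
    have := card_pos.mpr ⟨_, he⟩
    omega

lemma isAcyclic_ofEdges_of_subset (hγ : γ ∈ spanningTrees G) {s : Finset (Sym2 V)} (hs : s ⊆ γ) :
    (ofEdges s).IsAcyclic :=
  (isTree_of_mem_spanningTrees hγ).isAcyclic.anti (fromEdgeSet_mono (coe_subset.mpr hs))

variable {W : Finset V}

lemma card_inter_edgesWithin_add_one_le (hγ : γ ∈ spanningTrees G) (hW : W.Nonempty) :
    #(γ ∩ edgesWithin G W) + 1 ≤ #W :=
  card_add_one_le_of_isAcyclic inter_subset_right (isAcyclic_ofEdges_of_subset hγ inter_subset_left)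
    hW

lemma inter_edgesWithin_mem_spanningTreesOn (hγ : γ ∈ spanningTrees G) (hW : W.Nonempty)
    (hcard : #W ≤ #(γ ∩ edgesWithin G W) + 1) : γ ∩ edgesWithin G W ∈ spanningTreesOn G W :=
  mem_filter.mpr ⟨mem_univ _, isSpanningTreeOn_of_isAcyclic inter_subset_right
    (isAcyclic_ofEdges_of_subset hγ inter_subset_left) hW hcard⟩

end SpanningTrees

section Optimal

variable {G : SimpleGraph V} {μ : Finset (Sym2 V) → ℝ} {γ : Finset (Sym2 V)} {W : Finset V}
  {t : ℝ} {x : V}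

local notation "η" => eta (spanningTrees G) μ

/-- The denseness `θ(G[W])`. -/
def denseness (G : SimpleGraph V) (W : Finset V) : ℝ := #(edgesWithin G W) / ((#W : ℝ) - 1)

def IsDensest (G : SimpleGraph V) (W : Finset V) : Prop :=
  ∀ W' : Finset V, (G.induce (W' : Set V)).Connected → (edgesWithin G W').Nonempty →
    denseness G W' ≤ denseness G W

def usageSublevel (G : SimpleGraph V) (μ : Finset (Sym2 V) → ℝ) (t : ℝ) : SimpleGraph V :=
  G.deleteEdges {e | t < eta (spanningTrees G) μ e}

def usageComponent (G : SimpleGraph V) (μ : Finset (Sym2 V) → ℝ) (t : ℝ) (x : V) : Finset V :=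
  univ.filter ((usageSublevel G μ t).Reachable x)

lemma mem_edgeSet_usageSublevel {e : Sym2 V} :
    e ∈ (usageSublevel G μ t).edgeSet ↔ e ∈ G.edgeSet ∧ η e ≤ t := by
  simp [usageSublevel, edgeSet_deleteEdges]

lemma mem_usageComponent {v : V} :
    v ∈ usageComponent G μ t x ↔ (usageSublevel G μ t).Reachable x v := by
  simp [usageComponent]

lemma IsMEOOptimal.eta_le_of_not_reachable (hμ : IsMEOOptimal (spanningTrees G) μ)
    (hγ : γ ∈ spanningTrees G) (hpos : 0 < μ γ) {e : Sym2 V} (he : e ∈ γ) {w z : V}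
    (hwz : G.Adj w z) (hsep : ¬ ((ofEdges γ).deleteEdges {e}).Reachable w z) :
    η e ≤ η s(w, z) := by
  have := hμ.sum_eta_le hγ hpos (insert_erase_mem_spanningTrees hγ he hwz hsep)
  rw [sum_insert (notMem_erase_of_not_reachable hwz.ne hsep), ← sum_erase_add _ _ he] at this
  linarith

lemma IsMEOOptimal.eta_le_of_reachable (hμ : IsMEOOptimal (spanningTrees G) μ)
    (hγ : γ ∈ spanningTrees G) (hpos : 0 < μ γ) {e : Sym2 V} (he : e ∈ γ) {r v : V}
    (hrv : (usageSublevel G μ t).Reachable r v)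
    (hsep : ¬ ((ofEdges γ).deleteEdges {e}).Reachable r v) : η e ≤ t := by
  obtain ⟨p⟩ := hrv
  obtain ⟨⟨⟨w, z⟩, hwz⟩, -, hw, hz⟩ := p.exists_boundary_dart
    {u | ((ofEdges γ).deleteEdges {e}).Reachable r u} Reachable.rfl hsep
  obtain ⟨hwzG, hwzt⟩ := mem_edgeSet_usageSublevel.mp ((mem_edgeSet _).mpr hwz)
  exact (hμ.eta_le_of_not_reachable hγ hpos he hwzG fun h => hz (hw.trans h)).trans hwzt

lemma IsMEOOptimal.eta_le_of_mem_edgesWithin_usageComponent (hμ : IsMEOOptimal (spanningTrees G) μ)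
    (ht : 0 ≤ t) {e : Sym2 V} (he : e ∈ edgesWithin G (usageComponent G μ t x)) : η e ≤ t := by
  induction e using Sym2.ind with | h a b => ?_
  obtain ⟨hab, hU⟩ := mem_edgesWithin.mp he
  by_contra! hlt
  obtain ⟨γ, hγ, heγ, hpos⟩ := exists_mem_pos_of_eta_pos (ht.trans_lt hlt)
  have hsep : ¬ ((ofEdges γ).deleteEdges {s(a, b)}).Reachable a b :=
    isBridge_iff.mp <| isAcyclic_iff_forall_isBridge.mp (isTree_of_mem_spanningTrees hγ).isAcyclic
      (by rwa [edgeSet_ofEdges (mem_spanningTrees_iff.mp hγ).1])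
  have hrv := (mem_usageComponent.mp (hU a (Sym2.mem_mk_left a b))).symm.trans
    (mem_usageComponent.mp (hU b (Sym2.mem_mk_right a b)))
  exact hlt.not_ge (hμ.eta_le_of_reachable hγ hpos heγ hrv hsep)

/-- Each edge of the tree path from `x` to `v` separates `x` from `v`, which are joined by edges
of usage at most `t`; so the path itself only uses such edges and stays in the component. -/
lemma IsMEOOptimal.connected_induce_usageComponent (hμ : IsMEOOptimal (spanningTrees G) μ)
    (hγ : γ ∈ spanningTrees G) (hpos : 0 < μ γ) :
    ((ofEdges γ).induce (usageComponent G μ t x : Set V)).Connected := by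
  have hT := isTree_of_mem_spanningTrees hγ
  have hsub := (mem_spanningTrees_iff.mp hγ).1
  refine (connected_iff_exists_forall_reachable _).mpr
    ⟨⟨x, mem_usageComponent.mpr Reachable.rfl⟩, fun ⟨v, hv⟩ => ?_⟩
  obtain ⟨p, hp⟩ := (hT.connected.preconnected x v).exists_isPath
  have hlow : ∀ e ∈ p.edges, e ∈ (usageSublevel G μ t).edgeSet := fun e he => by
    have heγ := p.edges_subset_edgeSet he
    rw [edgeSet_ofEdges hsub, mem_coe] at heγ
    exact mem_edgeSet_usageSublevel.mpr ⟨hsub heγ, hμ.eta_le_of_reachable hγ hpos heγ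
      (mem_usageComponent.mp hv) (hT.isAcyclic.not_reachable_deleteEdges hp he)⟩
  have hsupp : ∀ u ∈ p.support, u ∈ (usageComponent G μ t x : Set V) := fun u hu => by
    rw [← p.support_transfer hlow] at hu
    exact mem_usageComponent.mpr ⟨(p.transfer _ hlow).takeUntil u hu⟩
  exact (p.induce _ hsupp).reachable

lemma IsMEOOptimal.exists_one_le_mul_denseness (hμ : IsMEOOptimal (spanningTrees G) μ)
    {y : V} (hxy : G.Adj x y) (ht : η s(x, y) ≤ t) :
    ∃ U : Finset V, (G.induce (U : Set V)).Connected ∧ (edgesWithin G U).Nonempty ∧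
      1 ≤ t * denseness G U := by
  set U := usageComponent G μ t x
  have hxy' : s(x, y) ∈ edgesWithin G U := by
    refine mem_edgesWithin.mpr ⟨hxy, fun v hv => ?_⟩
    rcases Sym2.mem_iff.mp hv with rfl | rfl
    · exact mem_usageComponent.mpr Reachable.rfl
    · exact mem_usageComponent.mpr (Adj.reachable (mem_edgeSet_usageSublevel.mpr ⟨hxy, ht⟩))
  have hconn : (G.induce (U : Set V)).Connected := by
    rw [show (U : Set V) = {v | (usageSublevel G μ t).Reachable x v} from
      Set.ext fun v => mem_usageComponent]
    exact connected_induce_setOf_reachable (deleteEdges_le _) x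
  have hspan : (#U : ℝ) - 1 ≤ ∑ e ∈ edgesWithin G U, η e := by
    rw [sum_eta]
    refine hμ.1.le_sum_mul fun γ hγ hpos => ?_
    have hc : ((ofEdges (γ ∩ edgesWithin G U)).induce (U : Set V)).Connected := by
      rw [induce_ofEdges_inter_edgesWithin (mem_spanningTrees_iff.mp hγ).1]
      exact hμ.connected_induce_usageComponent hγ hpos
    have : (#U : ℝ) ≤ #(γ ∩ edgesWithin G U) + 1 := by
      exact_mod_cast card_le_card_add_one_of_connected inter_subset_right hc
    linarith
  have hlevel : ∑ e ∈ edgesWithin G U, η e ≤ #(edgesWithin G U) * t := by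
    simpa using sum_le_card_nsmul _ _ t fun e he =>
      hμ.eta_le_of_mem_edgesWithin_usageComponent ((hμ.1.eta_nonneg _).trans ht) he
  have hU : (1 : ℝ) < #U := by exact_mod_cast one_lt_card_of_edgesWithin_nonempty ⟨_, hxy'⟩
  refine ⟨U, hconn, ⟨_, hxy'⟩, ?_⟩
  rw [denseness, mul_div_assoc', le_div_iff₀ (by linarith)]
  linarith

lemma IsMEOOptimal.one_le_eta_mul_denseness (hμ : IsMEOOptimal (spanningTrees G) μ)
    (hmax : IsDensest G W) {e : Sym2 V} (he : e ∈ G.edgeSet) :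
    1 ≤ η e * denseness G W := by
  induction e using Sym2.ind with | h x y => ?_
  obtain ⟨U, hUconn, hUe, hU⟩ := hμ.exists_one_le_mul_denseness he le_rfl
  exact hU.trans (mul_le_mul_of_nonneg_left (hmax U hUconn hUe) (hμ.1.eta_nonneg _))

lemma IsMEOOptimal.restrict_of_densest (hμ : IsMEOOptimal (spanningTrees G) μ)
    (hWe : (edgesWithin G W).Nonempty)
    (hmax : IsDensest G W) :
    (∀ γ ∈ spanningTrees G, 0 < μ γ → γ ∩ edgesWithin G W ∈ spanningTreesOn G W) ∧
      ∀ e ∈ edgesWithin G W, η e = (denseness G W)⁻¹ := by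
  have hW : (1 : ℝ) < #W := by exact_mod_cast one_lt_card_of_edgesWithin_nonempty hWe
  have hWne : W.Nonempty := card_pos.mp (by exact_mod_cast zero_lt_one.trans hW)
  have hθ : 0 < denseness G W := div_pos (by exact_mod_cast hWe.card_pos) (by linarith)
  have hforest : ∀ γ ∈ spanningTrees G, (#(γ ∩ edgesWithin G W) : ℝ) ≤ #W - 1 := fun γ hγ => by
    have : (#(γ ∩ edgesWithin G W) : ℝ) + 1 ≤ #W := by
      exact_mod_cast card_inter_edgesWithin_add_one_le hγ hWne
    linarith
  have hlow : ∀ e ∈ edgesWithin G W, (denseness G W)⁻¹ ≤ η e := fun e he =>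
    (inv_le_iff_one_le_mul₀ hθ).mpr (hμ.one_le_eta_mul_denseness hmax (mem_edgesWithin.mp he).1)
  have hsum : ∑ _e ∈ edgesWithin G W, (denseness G W)⁻¹ = #W - 1 := by
    rw [sum_const, nsmul_eq_mul, denseness, inv_div, mul_div_cancel₀]
    exact_mod_cast hWe.card_pos.ne'
  have hhigh : ∑ e ∈ edgesWithin G W, η e ≤ #W - 1 := by
    rw [sum_eta]
    exact hμ.1.sum_mul_le fun γ hγ _ => hforest γ hγ
  refine ⟨fun γ hγ hpos => ?_, fun e he => ?_⟩
  · have hcard := hμ.1.eq_of_le_sum_mul hforest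
      (by rw [← sum_eta, ← hsum]; exact sum_le_sum hlow) hγ hpos
    refine inter_edgesWithin_mem_spanningTreesOn hγ hWne ?_
    have : (#W : ℝ) ≤ #(γ ∩ edgesWithin G W) + 1 := by linarith
    exact_mod_cast this
  · exact ((sum_eq_sum_iff_of_le hlow).mp ((sum_le_sum hlow).antisymm (hhigh.trans hsum.ge))
      e he).symm

end Optimal

theorem densest_subgraph_is_homogeneous_core_general
    {V : Type*} [Fintype V] [DecidableEq V]
    (G : SimpleGraph V) (hG : G.Connected)
    (W : Finset V)
    (hWe : (edgesWithin G W).Nonempty)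
    (hmax : ∀ W' : Finset V, (G.induce (↑W' : Set V)).Connected →
      (edgesWithin G W').Nonempty →
        ((edgesWithin G W').card : ℝ) / ((W'.card : ℝ) - 1) ≤
          ((edgesWithin G W).card : ℝ) / ((W.card : ℝ) - 1)) :
    (∃ μ, IsPmf (spanningTreesOn G W) μ ∧
      ∃ c : ℝ, ∀ e ∈ edgesWithin G W, eta (spanningTreesOn G W) μ e = c) ∧
    (∀ γ, IsFair G γ → γ ∩ edgesWithin G W ∈ spanningTreesOn G W) := by
  obtain ⟨μ, hμ⟩ := exists_isMEOOptimal (spanningTrees_nonempty hG)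
  obtain ⟨hrestrict, hconst⟩ := hμ.restrict_of_densest hWe hmax
  refine ⟨⟨mapPmf (spanningTrees G) (· ∩ edgesWithin G W) μ, hμ.1.mapPmf hrestrict,
    (denseness G W)⁻¹, fun e he => ?_⟩, fun γ ⟨ν, hν, hνopt, hpos⟩ => ?_⟩
  · rw [eta_mapPmf hμ.1 hrestrict fun γ => by simp [he]]
    exact hconst e he
  · exact (IsMEOOptimal.restrict_of_densest ⟨hν, hνopt⟩ hWe hmax).1 γ (hν.mem_of_pos hpos) hpos

/-- an induced connected subgraph with at least one edge that
maximizes the denseness `θ(H) = |E_H|/(|V_H| - 1)` is a homogeneous core of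
`G`: it is homogeneous and every fair spanning tree of `G` restricts to a
spanning tree of it. -/
theorem densest_subgraph_is_homogeneous_core
    {V : Type*} [Fintype V] [DecidableEq V]
    (G : SimpleGraph V) (hG : G.Connected) (hE : G.edgeFinset.Nonempty)
    (W : Finset V) (hW : 2 ≤ W.card)
    (hconn : (G.induce (↑W : Set V)).Connected)
    (hWe : (edgesWithin G W).Nonempty)
    (hmax : ∀ W' : Finset V, (G.induce (↑W' : Set V)).Connected →
      (edgesWithin G W').Nonempty →
        ((edgesWithin G W').card : ℝ) / ((W'.card : ℝ) - 1) ≤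
          ((edgesWithin G W).card : ℝ) / ((W.card : ℝ) - 1)) :
    (∃ μ, IsPmf (spanningTreesOn G W) μ ∧
      ∃ c : ℝ, ∀ e ∈ edgesWithin G W, eta (spanningTreesOn G W) μ e = c) ∧
    (∀ γ, IsFair G γ → γ ∩ edgesWithin G W ∈ spanningTreesOn G W) :=
  densest_subgraph_is_homogeneous_core_general G hG W hWe hmax
end
end

section
/- Let d ≥ 2 and let G = (V,E) be a finite simple graph in which every vertex has degree exactly d, with |V| ≥ d + 1, and which is d-vertex-connected: for every set S ⊆ V with |S| < d, the induced subgraph on V \ S is connected. Then G is homogeneous: there exists a pmf μ on Γ_G whose edge usage probability η_μ is constant on E. -/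
noncomputable section
open scoped Classical
open Finset

variable {V : Type*} [Fintype V] [DecidableEq V]

/-!
The constant vector `(n - 1)/m` on the `m` edges lies in the convex hull of the indicator vectors
of spanning trees as soon as, by Hahn–Banach, every weight `w` admits a spanning tree `γ` with
`w(γ) ≥ (n - 1)/m · w(E)`. Kruskal's greedy algorithm, run on the edges in order of decreasing
weight, returns a tree meeting every prefix `P` of that order in `n - c(P)` edges, `c(P)` being the
number of components of `(V, P)`; by Abel summation it is heavy enough provided
`(n - 1)/m · |F| ≤ n - c(F)` for all `F ⊆ E`. For a `d`-regular, `d`-connected graph, each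
component of `(V, F)` (when there are at least two) has at least `d` edges of `G` leaving it, so
`2|F| ≤ d (n - c(F))`, which is this density bound since `2m = dn`.
-/

open SimpleGraph

theorem mem_convexHull_of_forall_exists_le {E : Type*} [TopologicalSpace E] [T2Space E]
    [AddCommGroup E] [Module ℝ E] [IsTopologicalAddGroup E] [ContinuousSMul ℝ E]
    [LocallyConvexSpace ℝ E] {s : Finset E} {x : E}
    (h : ∀ f : StrongDual ℝ E, ∃ y ∈ s, f x ≤ f y) : x ∈ convexHull ℝ (s : Set E) := by
  rw [← iInter_halfSpaces_eq (convex_convexHull ℝ _)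
    (s.finite_toSet.isCompact_convexHull ℝ).isClosed, Set.mem_iInter]
  intro f
  obtain ⟨y, hy, hxy⟩ := h f
  exact ⟨y, subset_convexHull ℝ _ hy, hxy⟩

theorem exists_weights_of_mem_convexHull_image {ι E : Type*} [AddCommGroup E] [Module ℝ E]
    {t : Finset ι} {f : ι → E} {x : E} (hx : x ∈ convexHull ℝ (f '' t)) :
    ∃ μ : ι → ℝ, (∀ i, 0 ≤ μ i) ∧ (∀ i ∉ t, μ i = 0) ∧ ∑ i ∈ t, μ i = 1 ∧
      ∑ i ∈ t, μ i • f i = x := by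
  refine convexHull_min (t := {y | ∃ μ : ι → ℝ, (∀ i, 0 ≤ μ i) ∧ (∀ i ∉ t, μ i = 0) ∧
    ∑ i ∈ t, μ i = 1 ∧ ∑ i ∈ t, μ i • f i = y}) ?_ ?_ hx
  · rintro _ ⟨i, hi, rfl⟩
    rw [Finset.mem_coe] at hi
    refine ⟨Pi.single i 1, fun j ↦ ?_, fun j hj ↦ ?_, by simp [hi], by simp [Pi.single_apply, hi]⟩
    · by_cases hj : j = i <;> simp [hj]
    · exact Pi.single_eq_of_ne (ne_of_mem_of_not_mem hi hj).symm _
  · rintro _ ⟨μ, hμ0, hμt, hμ1, rfl⟩ _ ⟨ν, hν0, hνt, hν1, rfl⟩ a b ha hb hab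
    refine ⟨a • μ + b • ν, fun i ↦ ?_, fun i hi ↦ ?_, ?_, ?_⟩
    · simp only [Pi.add_apply, Pi.smul_apply, smul_eq_mul]
      exact add_nonneg (mul_nonneg ha (hμ0 i)) (mul_nonneg hb (hν0 i))
    · simp [hμt i hi, hνt i hi]
    · simp [Finset.sum_add_distrib, ← Finset.mul_sum, hμ1, hν1, hab]
    · simp [Finset.sum_add_distrib, add_smul, mul_smul, Finset.smul_sum]

theorem exists_isPmf_eta_eq_of_forall_exists_le {V : Type*} [Fintype V] [DecidableEq V]
    {Γ : Finset (Finset (Sym2 V))} {E : Finset (Sym2 V)} {c : ℝ}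
    (h : ∀ w : Sym2 V → ℝ, ∃ γ ∈ Γ, c * ∑ e ∈ E, w e ≤ ∑ e ∈ γ, w e) :
    ∃ μ, IsPmf Γ μ ∧ ∀ e ∈ E, eta Γ μ e = c := by
  let ind (γ : Finset (Sym2 V)) : Sym2 V → ℝ := fun e ↦ if e ∈ γ then 1 else 0
  have hf (f : StrongDual ℝ (Sym2 V → ℝ)) (γ : Finset (Sym2 V)) :
      f (ind γ) = ∑ e ∈ γ, f (Pi.single e 1) := by
    rw [← f.coe_coe, LinearMap.pi_apply_eq_sum_univ]
    simp only [ind, ite_smul, one_smul, zero_smul, Finset.sum_ite_mem, Finset.univ_inter]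
    refine Finset.sum_congr rfl fun e _ ↦ congrArg f (funext fun j ↦ ?_)
    simp [Pi.single_apply, eq_comm]
  have hx : c • ind E ∈ convexHull ℝ (ind '' Γ) := by
    rw [← Finset.coe_image]
    refine mem_convexHull_of_forall_exists_le fun f ↦ ?_
    obtain ⟨γ, hγ, hle⟩ := h fun e ↦ f (Pi.single e 1)
    exact ⟨ind γ, Finset.mem_image_of_mem _ hγ, by rwa [map_smul, hf, hf, smul_eq_mul]⟩
  obtain ⟨μ, hμ0, hμΓ, hμ1, hμx⟩ := exists_weights_of_mem_convexHull_image hx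
  refine ⟨μ, ⟨hμ0, hμΓ, hμ1⟩, fun e he ↦ ?_⟩
  simpa [ind, he, eta, Finset.sum_filter] using congrFun hμx e

theorem Finset.exists_list_nodup_pairwise_ge {α β : Type*} [DecidableEq α] [LinearOrder β]
    (s : Finset α) (w : α → β) :
    ∃ l : List α, l.Nodup ∧ l.toFinset = s ∧ l.Pairwise fun a b ↦ w b ≤ w a := by
  have hperm := List.mergeSort_perm s.toList fun a b ↦ decide (w b ≤ w a)
  refine ⟨_, hperm.nodup_iff.mpr s.nodup_toList, ?_, ?_⟩
  · ext a
    rw [List.mem_toFinset, hperm.mem_iff, Finset.mem_toList]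
  · refine (List.pairwise_mergeSort (fun a b c hab hbc ↦ ?_) (fun a b ↦ ?_) _).imp
      of_decide_eq_true
    · simp only [decide_eq_true_eq] at *
      exact hbc.trans hab
    · simpa using le_total (w b) (w a)

theorem List.sum_map_mul_le_sum_map_mul_of_pairwise {α : Type*} (w x : α → ℝ) {l : List α}
    (hl : l.Pairwise fun a b ↦ w b ≤ w a) (hx : ∀ p, p <+: l → 0 ≤ (p.map x).sum) {t : ℝ}
    (ht : ∀ a ∈ l, t ≤ w a) : (l.map x).sum * t ≤ (l.map fun a ↦ x a * w a).sum := by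
  induction l using List.reverseRecOn generalizing t with
  | nil => simp
  | append_singleton l e ih =>
    obtain ⟨hl, -, hle⟩ := List.pairwise_append.mp hl
    have ih := ih hl (fun p hp ↦ hx p (hp.trans (List.prefix_append l [e])))
      (fun a ha ↦ hle a ha e (List.mem_singleton_self e))
    have hsum := hx _ (List.prefix_refl _)
    simp only [List.map_append, List.map_cons, List.map_nil, List.sum_append, List.sum_cons,
      List.sum_nil, add_zero] at hsum ⊢
    calc ((l.map x).sum + x e) * t ≤ ((l.map x).sum + x e) * w e :=
          mul_le_mul_of_nonneg_left (ht e (by simp)) hsum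
      _ ≤ (l.map fun a ↦ x a * w a).sum + x e * w e := by linarith

section Components

variable {V : Type*}

def numComponents (F : Finset (Sym2 V)) : ℕ :=
  Nat.card (fromEdgeSet (F : Set (Sym2 V))).ConnectedComponent

theorem fromEdgeSet_le_of_subset {F F' : Finset (Sym2 V)} (h : F ⊆ F') :
    fromEdgeSet (F : Set (Sym2 V)) ≤ fromEdgeSet ↑F' :=
  fromEdgeSet_mono (Finset.coe_subset.mpr h)

theorem reachable_fromEdgeSet_of_mem {F : Finset (Sym2 V)} {a b : V} (h : s(a, b) ∈ F) :
    (fromEdgeSet (F : Set (Sym2 V))).Reachable a b := by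
  by_cases hab : a = b
  · exact hab ▸ .rfl
  · exact ((fromEdgeSet_adj _).mpr ⟨h, hab⟩).reachable

theorem reachable_or_of_reachable_insert [DecidableEq V] {F : Finset (Sym2 V)} {a b x y : V}
    (h : (fromEdgeSet ↑(insert s(a, b) F)).Reachable x y) :
    (fromEdgeSet ↑F).Reachable x y ∨
      (fromEdgeSet ↑F).Reachable x a ∧ (fromEdgeSet ↑F).Reachable b y ∨
      (fromEdgeSet ↑F).Reachable x b ∧ (fromEdgeSet ↑F).Reachable a y := by
  obtain ⟨p⟩ := h
  induction p with
  | nil => exact .inl .rfl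
  | @cons u v w huv p ih =>
    rw [fromEdgeSet_adj, Finset.coe_insert, Set.mem_insert_iff] at huv
    obtain ⟨he | he, hne⟩ := huv
    · rcases Sym2.eq_iff.mp he with ⟨rfl, rfl⟩ | ⟨rfl, rfl⟩
      · rcases ih with h | ⟨-, h⟩ | ⟨-, h⟩
        exacts [.inr (.inl ⟨.rfl, h⟩), .inr (.inl ⟨.rfl, h⟩), .inl h]
      · rcases ih with h | ⟨-, h⟩ | ⟨-, h⟩
        exacts [.inr (.inr ⟨.rfl, h⟩), .inl h, .inr (.inr ⟨.rfl, h⟩)]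
    · have huv : (fromEdgeSet (F : Set (Sym2 V))).Reachable u v :=
        ((fromEdgeSet_adj _).mpr ⟨he, hne⟩).reachable
      rcases ih with h | ⟨h, h'⟩ | ⟨h, h'⟩
      exacts [.inl (huv.trans h), .inr (.inl ⟨huv.trans h, h'⟩),
        .inr (.inr ⟨huv.trans h, h'⟩)]

theorem numComponents_insert_of_reachable [DecidableEq V] {F : Finset (Sym2 V)} {a b : V}
    (hab : (fromEdgeSet ↑F).Reachable a b) :
    numComponents (insert s(a, b) F) = numComponents F := by
  have hle := fromEdgeSet_le_of_subset (Finset.subset_insert s(a, b) F)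
  refine (Nat.card_eq_of_bijective _ ⟨?_, ConnectedComponent.surjective_map_ofLE hle⟩).symm
  intro c₁ c₂ hc
  induction c₁ using ConnectedComponent.ind with | h u => ?_
  induction c₂ using ConnectedComponent.ind with | h v => ?_
  simp only [ConnectedComponent.map_mk, ConnectedComponent.eq, Hom.coe_ofLE, id] at hc ⊢
  rcases reachable_or_of_reachable_insert hc with h | ⟨h, h'⟩ | ⟨h, h'⟩
  exacts [h, h.trans (hab.trans h'), h.trans (hab.symm.trans h')]

theorem numComponents_insert_add_one_of_not_reachable [Finite V] [DecidableEq V]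
    {F : Finset (Sym2 V)} {a b : V} (hab : ¬(fromEdgeSet ↑F).Reachable a b) :
    numComponents (insert s(a, b) F) + 1 = numComponents F := by
  have hle := fromEdgeSet_le_of_subset (Finset.subset_insert s(a, b) F)
  set π := ConnectedComponent.map (Hom.ofLE hle)
  set B := (fromEdgeSet (F : Set (Sym2 V))).connectedComponentMk b
  -- the new edge merges the components of `a` and `b`, and nothing else
  have hinj : Set.InjOn π {B}ᶜ := by
    intro c₁ hc₁ c₂ hc₂ hc
    induction c₁ using ConnectedComponent.ind with | h u => ?_
    induction c₂ using ConnectedComponent.ind with | h v => ?_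
    simp only [π, ConnectedComponent.map_mk, ConnectedComponent.eq, Hom.coe_ofLE, id] at hc ⊢
    simp only [B, Set.mem_compl_singleton_iff, ne_eq, ConnectedComponent.eq] at hc₁ hc₂
    rcases reachable_or_of_reachable_insert hc with h | ⟨-, h⟩ | ⟨h, -⟩
    exacts [h, absurd h.symm hc₂, absurd h hc₁]
  have himage : π '' {B}ᶜ = Set.univ := by
    refine Set.eq_univ_of_forall fun c ↦ ?_
    obtain ⟨c', rfl⟩ := ConnectedComponent.surjective_map_ofLE hle c
    by_cases hc' : c' = B
    · refine ⟨(fromEdgeSet (F : Set (Sym2 V))).connectedComponentMk a, by simpa [B] using hab, ?_⟩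
      simp only [π, hc', B, ConnectedComponent.map_mk, Hom.coe_ofLE, id, ConnectedComponent.eq]
      exact reachable_fromEdgeSet_of_mem (Finset.mem_insert_self _ _)
    · exact ⟨c', hc', rfl⟩
  rw [numComponents, numComponents, ← Set.ncard_univ, ← himage, hinj.ncard_image,
    ← Set.ncard_univ, Set.compl_eq_univ_sdiff, Set.ncard_sdiff_singleton_add_one (Set.mem_univ _)]

theorem numComponents_empty [Fintype V] :
    numComponents (∅ : Finset (Sym2 V)) = Fintype.card V := by
  rw [numComponents, ← Nat.card_eq_fintype_card, Finset.coe_empty, fromEdgeSet_empty]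
  refine (Nat.card_eq_of_bijective _ ⟨fun u v huv ↦ ?_, Quot.mk_surjective⟩).symm
  exact reachable_bot.mp (ConnectedComponent.exact huv)

theorem numComponents_eq_one_iff {F : Finset (Sym2 V)} :
    numComponents F = 1 ↔ (fromEdgeSet (F : Set (Sym2 V))).Connected := by
  rw [numComponents, Nat.card_eq_one_iff_unique, connected_iff]
  constructor
  · rintro ⟨_, ⟨c⟩⟩
    exact ⟨fun u v ↦ ConnectedComponent.exact (Subsingleton.elim _ _), ⟨c.out⟩⟩
  · rintro ⟨hpre, ⟨v⟩⟩
    exact ⟨hpre.subsingleton_connectedComponent, ⟨connectedComponentMk _ v⟩⟩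

theorem exists_greedy_forest [Fintype V] [DecidableEq V] (l : List (Sym2 V)) :
    ∃ γ ⊆ l.toFinset,
      (∀ p, p <+: l → #(γ ∩ p.toFinset) + numComponents p.toFinset = Fintype.card V) ∧
        #γ + numComponents γ = Fintype.card V := by
  induction l using List.reverseRecOn with
  | nil => exact ⟨∅, by simp, fun p hp ↦ by simp [List.prefix_nil.mp hp, numComponents_empty],
      by simp [numComponents_empty]⟩
  | append_singleton l e ih =>
    obtain ⟨γ, hγl, hpre, hγ⟩ := ih
    have hl := hpre l (List.prefix_refl l)
    rw [Finset.inter_eq_left.mpr hγl] at hl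
    have htoFinset : (l ++ [e]).toFinset = insert e l.toFinset := by ext; simp
    induction e using Sym2.ind with | h a b => ?_
    by_cases hab : (fromEdgeSet (l.toFinset : Set (Sym2 V))).Reachable a b
    · refine ⟨γ, hγl.trans (by simp), fun p hp ↦ ?_, hγ⟩
      rcases List.prefix_concat_iff.mp hp with rfl | hp
      · rwa [htoFinset, numComponents_insert_of_reachable hab,
          Finset.inter_eq_left.mpr (hγl.trans (Finset.subset_insert _ _))]
      · exact hpre p hp
    · have hγab : ¬(fromEdgeSet (γ : Set (Sym2 V))).Reachable a b :=
        fun h ↦ hab (h.mono (fromEdgeSet_le_of_subset hγl))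
      have hel : s(a, b) ∉ l.toFinset := fun h ↦ hab (reachable_fromEdgeSet_of_mem h)
      have heγ : s(a, b) ∉ γ := fun h ↦ hel (hγl h)
      refine ⟨insert s(a, b) γ, ?_, fun p hp ↦ ?_, ?_⟩
      · rw [htoFinset]
        exact Finset.insert_subset_insert _ hγl
      · rcases List.prefix_concat_iff.mp hp with rfl | hp
        · have := numComponents_insert_add_one_of_not_reachable hab
          rw [htoFinset, Finset.inter_eq_left.mpr (Finset.insert_subset_insert _ hγl),
            Finset.card_insert_of_notMem heγ]
          omega
        · have hep : s(a, b) ∉ p.toFinset := fun h ↦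
            hel (List.mem_toFinset.mpr (hp.subset (List.mem_toFinset.mp h)))
          rw [Finset.insert_inter_of_notMem hep]
          exact hpre p hp
      · have := numComponents_insert_add_one_of_not_reachable hγab
        rw [Finset.card_insert_of_notMem heγ]
        omega

end Components

section SpanningTrees

variable {V : Type*} [Fintype V] [DecidableEq V] (G : SimpleGraph V)

theorem subset_edgeFinset_of_mem_spanningTrees {γ : Finset (Sym2 V)}
    (hγ : γ ∈ spanningTrees G) : γ ⊆ G.edgeFinset :=
  fun _ he ↦ G.mem_edgeFinset.mpr ((Finset.mem_filter.mp hγ).2.1 he)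

theorem card_add_one_of_mem_spanningTrees {γ : Finset (Sym2 V)} (hγ : γ ∈ spanningTrees G) :
    #γ + 1 = Fintype.card V := by
  obtain ⟨-, -, hconn, hcard⟩ := Finset.mem_filter.mp hγ
  have : Nonempty V := hconn.nonempty
  have := Fintype.card_pos (α := V)
  omega

theorem exists_spanningTree_forall_prefix (hG : G.Connected) {l : List (Sym2 V)}
    (hl : l.toFinset = G.edgeFinset) :
    ∃ γ ∈ spanningTrees G,
      ∀ p, p <+: l → #(γ ∩ p.toFinset) + numComponents p.toFinset = Fintype.card V := by
  obtain ⟨γ, hγl, hpre, hγ⟩ := exists_greedy_forest l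
  rw [hl] at hγl
  have hE : numComponents G.edgeFinset = 1 := by
    rw [numComponents_eq_one_iff, coe_edgeFinset, fromEdgeSet_edgeSet]
    exact hG
  have hγcard : #γ + 1 = Fintype.card V := by
    simpa [hl, Finset.inter_eq_left.mpr hγl, hE] using hpre l (List.prefix_refl l)
  refine ⟨γ, Finset.mem_filter.mpr ⟨Finset.mem_univ _, ?_, ?_, by omega⟩, hpre⟩
  · exact fun e he ↦ G.mem_edgeFinset.mp (hγl he)
  · exact numComponents_eq_one_iff.mp (by omega)

theorem exists_heavy_spanningTree (hG : G.Connected) {c : ℝ}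
    (hc : c * #G.edgeFinset + 1 = Fintype.card V)
    (hdense : ∀ F ⊆ G.edgeFinset, c * #F + numComponents F ≤ Fintype.card V)
    (w : Sym2 V → ℝ) :
    ∃ γ ∈ spanningTrees G, c * ∑ e ∈ G.edgeFinset, w e ≤ ∑ e ∈ γ, w e := by
  obtain ⟨l, hnodup, hlE, hsorted⟩ := G.edgeFinset.exists_list_nodup_pairwise_ge w
  obtain ⟨γ, hγ, hpre⟩ := exists_spanningTree_forall_prefix G hG hlE
  have hγE := subset_edgeFinset_of_mem_spanningTrees G hγ
  refine ⟨γ, hγ, ?_⟩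
  -- Abel summation of `x = 1_γ - c` against `w`, which decreases along `l`
  set x : Sym2 V → ℝ := fun e ↦ (if e ∈ γ then 1 else 0) - c
  have hsum_x (p : List (Sym2 V)) (hp : p.Nodup) :
      (p.map x).sum = #(γ ∩ p.toFinset) - c * #p.toFinset := by
    rw [← List.sum_toFinset _ hp, Finset.sum_sub_distrib, Finset.sum_boole, Finset.sum_const,
      nsmul_eq_mul, Finset.filter_mem_eq_inter, Finset.inter_comm, mul_comm]
  have hprefix (p : List (Sym2 V)) (hp : p <+: l) : 0 ≤ (p.map x).sum := by
    have hpE : p.toFinset ⊆ G.edgeFinset :=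
      hlE ▸ fun e he ↦ List.mem_toFinset.mpr (hp.subset (List.mem_toFinset.mp he))
    have hcount : (#(γ ∩ p.toFinset) : ℝ) + numComponents p.toFinset = Fintype.card V := by
      exact_mod_cast hpre p hp
    rw [hsum_x p (hnodup.sublist hp.sublist)]
    linarith [hdense _ hpE]
  have htotal : (l.map x).sum = 0 := by
    have hcard : (#γ : ℝ) + 1 = Fintype.card V := by
      exact_mod_cast card_add_one_of_mem_spanningTrees G hγ
    rw [hsum_x l hnodup, hlE, Finset.inter_eq_left.mpr hγE]
    linarith
  obtain ⟨t, ht⟩ := (l.map w).toFinset.bddBelow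
  have habel := List.sum_map_mul_le_sum_map_mul_of_pairwise w x hsorted hprefix
    (t := t) fun a ha ↦ ht (by simpa using ⟨a, ha, rfl⟩)
  rw [htotal, zero_mul, ← List.sum_toFinset _ hnodup, hlE] at habel
  simpa [x, sub_mul, Finset.sum_sub_distrib, ite_mul, Finset.sum_ite_mem, Finset.mul_sum,
    Finset.inter_eq_right.mpr hγE] using habel

end SpanningTrees

namespace SimpleGraph

variable {V : Type*} (G : SimpleGraph V)

theorem sum_card_filter_adj_comm (S T : Finset V) :
    ∑ v ∈ S, #{u ∈ T | G.Adj v u} = ∑ u ∈ T, #{v ∈ S | G.Adj u v} := by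
  simp only [Finset.card_filter]
  rw [Finset.sum_comm]
  simp only [G.adj_comm]

variable [Fintype V] {G}

theorem two_mul_card_edgeFinset_of_regular {d : ℕ} (hreg : ∀ v, G.degree v = d) :
    2 * #G.edgeFinset = Fintype.card V * d := by
  rw [← sum_degrees_eq_twice_card_edges, Finset.sum_congr rfl fun v _ ↦ hreg v, Finset.sum_const,
    Finset.card_univ, smul_eq_mul]

theorem card_edgeFinset_pos_of_regular [Nonempty V] {d : ℕ} (hd : 0 < d)
    (hreg : ∀ v, G.degree v = d) : 0 < #G.edgeFinset := by
  have := two_mul_card_edgeFinset_of_regular hreg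
  have : 0 < Fintype.card V := Fintype.card_pos
  nlinarith

variable [DecidableEq V] (G)

def IsVertexConnected (k : ℕ) : Prop :=
  ∀ S : Finset V, #S < k → (G.induce ↑(Finset.univ \ S)).Connected

variable {G}

theorem IsVertexConnected.connected {k : ℕ} (hG : G.IsVertexConnected k) (hk : 0 < k) :
    G.Connected := by
  have h := hG ∅ (by simpa using hk)
  rw [Finset.sdiff_empty, Finset.coe_univ] at h
  exact h.map (induceUnivIso G).toHom (induceUnivIso G).toEquiv.surjective

variable (G)

theorem card_filter_adj_add_card_filter_adj_compl (S : Finset V) (v : V) :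
    #{u ∈ S | G.Adj v u} + #{u ∈ Sᶜ | G.Adj v u} = G.degree v := by
  rw [← Finset.card_union_of_disjoint (Finset.disjoint_filter_filter disjoint_compl_right),
    ← Finset.filter_union, Finset.union_compl, ← G.card_neighborFinset_eq_degree,
    neighborFinset_eq_filter]

variable {G}

theorem IsVertexConnected.le_sum_card_filter_adj_compl {d : ℕ} (hG : G.IsVertexConnected d)
    (hdeg : ∀ v, d ≤ G.degree v) {S : Finset V} (hS : S.Nonempty) (hSc : Sᶜ.Nonempty) :
    d ≤ ∑ v ∈ S, #{u ∈ Sᶜ | G.Adj v u} := by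
  by_contra! hlt
  set T := S.biUnion fun v ↦ {u ∈ Sᶜ | G.Adj v u}
  have hT : #T < d := Finset.card_biUnion_le.trans_lt hlt
  by_cases hcover : Sᶜ ⊆ T
  · -- `Sᶜ` has `s < d` vertices, each with at least `d + 1 - s` neighbours in `S`,
    -- and `s (d + 1 - s) ≥ d`.
    set s := #Sᶜ
    have hs : s < d := (Finset.card_le_card hcover).trans_lt hT
    have hs1 : 1 ≤ s := hSc.card_pos
    have hout (u : V) (hu : u ∈ Sᶜ) : d + 1 ≤ #{v ∈ S | G.Adj u v} + s := by
      have hsub : {v ∈ Sᶜ | G.Adj u v} ⊆ Sᶜ.erase u := fun v hv ↦ by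
        rw [Finset.mem_filter] at hv
        exact Finset.mem_erase.mpr ⟨hv.2.ne.symm, hv.1⟩
      have := Finset.card_le_card hsub
      rw [Finset.card_erase_of_mem hu] at this
      have := card_filter_adj_add_card_filter_adj_compl G S u
      have := hdeg u
      omega
    have hsum : s * (d + 1) ≤ ∑ u ∈ Sᶜ, #{v ∈ S | G.Adj u v} + s * s := by
      simpa [Finset.sum_add_distrib, mul_comm] using Finset.sum_le_sum hout
    rw [sum_card_filter_adj_comm] at hlt
    nlinarith
  · -- a walk in `G - T` from `S` to a vertex outside `S ∪ T` has to leave `S` through `T`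
    obtain ⟨y, hyS, hyT⟩ := Finset.not_subset.mp hcover
    obtain ⟨x, hx⟩ := hS
    have hxT : x ∉ T := fun h ↦ by
      obtain ⟨v, -, hv⟩ := Finset.mem_biUnion.mp h
      exact (Finset.mem_compl.mp (Finset.mem_filter.mp hv).1) hx
    obtain ⟨p⟩ := (hG T hT).preconnected ⟨x, by simpa using hxT⟩ ⟨y, by simpa using hyT⟩
    obtain ⟨e, -, he₁, he₂⟩ := p.exists_boundary_dart {z | z.1 ∈ S} hx (Finset.mem_compl.mp hyS)
    have : e.snd.1 ∈ T := Finset.mem_biUnion.mpr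
      ⟨e.fst.1, he₁, Finset.mem_filter.mpr ⟨Finset.mem_compl.mpr he₂, e.adj⟩⟩
    simpa [this] using e.snd.2

theorem IsVertexConnected.mul_card_connectedComponent_le {d : ℕ} (hG : G.IsVertexConnected d)
    (hdeg : ∀ v, d ≤ G.degree v) (H : SimpleGraph V) [DecidableRel H.Adj]
    (hH : 1 < Nat.card H.ConnectedComponent) :
    d * Nat.card H.ConnectedComponent ≤
      ∑ v, #{u ∈ (H.connectedComponentMk v).supp.toFinsetᶜ | G.Adj v u} := by
  rw [Nat.card_eq_fintype_card] at hH ⊢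
  rw [← Finset.card_univ, mul_comm, ← smul_eq_mul, ← Finset.sum_const,
    ← Finset.sum_fiberwise Finset.univ H.connectedComponentMk]
  refine Finset.sum_le_sum fun c _ ↦ ?_
  induction c using ConnectedComponent.ind with | h v => ?_
  obtain ⟨c', hc'⟩ := Fintype.exists_ne_of_one_lt_card hH (H.connectedComponentMk v)
  induction c' using ConnectedComponent.ind with | h w => ?_
  refine (hG.le_sum_card_filter_adj_compl hdeg (S := (H.connectedComponentMk v).supp.toFinset)
    ⟨v, Set.mem_toFinset.mpr rfl⟩ ⟨w, by simpa using hc'⟩).trans_eq ?_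
  refine Finset.sum_congr (by ext; simp) fun u hu ↦ ?_
  rw [(Finset.mem_filter.mp hu).2]

theorem degree_add_card_filter_adj_compl_supp_le {H : SimpleGraph V} [DecidableRel H.Adj]
    (hH : H ≤ G) (v : V) :
    H.degree v + #{u ∈ (H.connectedComponentMk v).supp.toFinsetᶜ | G.Adj v u} ≤ G.degree v := by
  have hsub : H.neighborFinset v ⊆ {u ∈ (H.connectedComponentMk v).supp.toFinset | G.Adj v u} :=
    fun u hu ↦ by
      have hadj : H.Adj v u := (H.mem_neighborFinset v u).mp hu
      refine Finset.mem_filter.mpr ⟨?_, hH hadj⟩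
      simpa using (ConnectedComponent.sound hadj.reachable).symm
  have := Finset.card_le_card hsub
  rw [card_neighborFinset_eq_degree] at this
  have := card_filter_adj_add_card_filter_adj_compl G (H.connectedComponentMk v).supp.toFinset v
  omega

theorem sum_degree_fromEdgeSet {F : Finset (Sym2 V)} (hF : F ⊆ G.edgeFinset) :
    ∑ v, (fromEdgeSet (F : Set (Sym2 V))).degree v = 2 * #F := by
  convert (fromEdgeSet (F : Set (Sym2 V))).sum_degrees_eq_twice_card_edges using 3
  ext e
  simp only [mem_edgeFinset, edgeSet_fromEdgeSet, Set.mem_sdiff, Finset.mem_coe,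
    Sym2.mem_diagSet, iff_self_and]
  exact fun he ↦ G.not_isDiag_of_mem_edgeSet (G.mem_edgeFinset.mp (hF he))

theorem IsVertexConnected.two_mul_card_add_mul_numComponents_le {d : ℕ}
    (hG : G.IsVertexConnected d) (hreg : ∀ v, G.degree v = d) {F : Finset (Sym2 V)}
    (hF : F ⊆ G.edgeFinset) (hF2 : 2 ≤ numComponents F) :
    2 * #F + d * numComponents F ≤ d * Fintype.card V := by
  have hFG : fromEdgeSet (F : Set (Sym2 V)) ≤ G := fun u v huv ↦
    G.mem_edgeFinset.mp (hF ((fromEdgeSet_adj _).mp huv).1)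
  have hcut := hG.mul_card_connectedComponent_le (fun v ↦ (hreg v).ge) _ hF2
  have hsum := Finset.sum_le_sum fun v (_ : v ∈ Finset.univ) ↦
    degree_add_card_filter_adj_compl_supp_le hFG v
  rw [Finset.sum_add_distrib, sum_degree_fromEdgeSet hF, Finset.sum_congr rfl fun v _ ↦ hreg v,
    Finset.sum_const, Finset.card_univ, smul_eq_mul] at hsum
  rw [numComponents]
  linarith [mul_comm d (Fintype.card V)]

theorem IsVertexConnected.mul_card_add_numComponents_le {d : ℕ} (hG : G.IsVertexConnected d)
    (hd : 0 < d) (hreg : ∀ v, G.degree v = d) {F : Finset (Sym2 V)} (hF : F ⊆ G.edgeFinset) :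
    ((Fintype.card V : ℝ) - 1) / #G.edgeFinset * #F + numComponents F ≤ Fintype.card V := by
  have : Nonempty V := (hG.connected hd).nonempty
  have hn : (1 : ℝ) ≤ Fintype.card V := by exact_mod_cast Fintype.card_pos
  have hm : 2 * (#G.edgeFinset : ℝ) = Fintype.card V * d := by
    exact_mod_cast two_mul_card_edgeFinset_of_regular hreg
  have hm0 : (0 : ℝ) < #G.edgeFinset := by exact_mod_cast card_edgeFinset_pos_of_regular hd hreg
  have hFm : (#F : ℝ) ≤ #G.edgeFinset := by exact_mod_cast Finset.card_le_card hF
  rw [div_mul_eq_mul_div, div_add' _ _ _ hm0.ne', div_le_iff₀ hm0]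
  rcases le_or_gt (numComponents F) 1 with h1 | h2
  · have h1 : (numComponents F : ℝ) ≤ 1 := by exact_mod_cast h1
    nlinarith
  · have hdense : 2 * (#F : ℝ) + d * numComponents F ≤ d * Fintype.card V := by
      exact_mod_cast hG.two_mul_card_add_mul_numComponents_le hreg hF h2
    nlinarith

end SimpleGraph

theorem regular_connected_is_homogeneous_general
    {V : Type*} [Fintype V] [DecidableEq V]
    (G : SimpleGraph V) (d : ℕ) (hd : 2 ≤ d)
    (hreg : ∀ v : V, G.degree v = d)
    (hconn : ∀ S : Finset V, S.card < d →
      (G.induce (↑(Finset.univ \ S) : Set V)).Connected) :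
    IsHomogeneous G := by
  have hvc : G.IsVertexConnected d := hconn
  have hd₀ : 0 < d := by omega
  have hG := hvc.connected hd₀
  have : Nonempty V := hG.nonempty
  have hm : (#G.edgeFinset : ℝ) ≠ 0 := by
    exact_mod_cast (card_edgeFinset_pos_of_regular hd₀ hreg).ne'
  set c : ℝ := ((Fintype.card V : ℝ) - 1) / #G.edgeFinset
  have hc : c * #G.edgeFinset + 1 = Fintype.card V := by
    rw [div_mul_cancel₀ _ hm, sub_add_cancel]
  obtain ⟨μ, hμ, hη⟩ := exists_isPmf_eta_eq_of_forall_exists_le <|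
    exists_heavy_spanningTree G hG hc fun F hF ↦ hvc.mul_card_add_numComponents_le hd₀ hreg hF
  exact ⟨μ, hμ, c, hη⟩

/-- a `d`-regular, `d`-vertex-connected finite simple graph
(`d ≥ 2`, `|V| ≥ d + 1`) is homogeneous. -/
theorem regular_connected_is_homogeneous
    {V : Type*} [Fintype V] [DecidableEq V]
    (G : SimpleGraph V) (d : ℕ) (hd : 2 ≤ d)
    (hreg : ∀ v : V, G.degree v = d)
    (hcard : d + 1 ≤ Fintype.card V)
    (hconn : ∀ S : Finset V, S.card < d →
      (G.induce (↑(Finset.univ \ S) : Set V)).Connected) :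
    IsHomogeneous G :=
  regular_connected_is_homogeneous_general G d hd hreg hconn
end
end
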